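/- Let Q be a finite quiver, θ : ℤ^{Q_0} → ℤ a stability, and X a nonzero representation of Q over ℂ with Harder–Narasimhan filtration 0 = X_0 ⊂ X_1 ⊂ ⋯ ⊂ X_r = X; write μ_k = μ(X_k/X_{k−1}). Then for every subrepresentation U ⊆ X and every k ∈ {1, …, r}, the inequality θ(dim U) ≤ θ(dim X_{k−1}) + μ_k · (dim U − dim X_{k−1}) holds in ℚ, where dim denotes total dimension and θ is applied to dimension vectors. Equivalently, the point (dim U, θ(dim U)) lies on or below the concave polygon with vertices (dim X_k, θ(dim X_k)), k = 0, …, r. -/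

import Mathlib

open scoped BigOperators

/-- A finite quiver. -/
structure FinQuiver where
  V : Type
  A : Type
  [fintypeV : Fintype V]
  [fintypeA : Fintype A]
  [decEqV : DecidableEq V]
  [decEqA : DecidableEq A]
  src : A → V
  tgt : A → V

attribute [instance] FinQuiver.fintypeV FinQuiver.fintypeA FinQuiver.decEqV FinQuiver.decEqA

/-- A finite-dimensional complex representation of a quiver. -/
structure QRep (Q : FinQuiver) where
  carrier : Q.V → Type
  [acg : ∀ i, AddCommGroup (carrier i)]
  [mod : ∀ i, Module ℂ (carrier i)]
  [fd : ∀ i, FiniteDimensional ℂ (carrier i)]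
  map : ∀ a : Q.A, carrier (Q.src a) →ₗ[ℂ] carrier (Q.tgt a)

attribute [instance] QRep.acg QRep.mod QRep.fd

namespace QRep

variable {Q : FinQuiver}

/-- A family of subspaces of a representation. -/
abbrev SubFam (X : QRep Q) := ∀ i, Submodule ℂ (X.carrier i)

/-- The family of subspaces is a subrepresentation: it is stable under all structure maps. -/
def IsSubRep (X : QRep Q) (V : X.SubFam) : Prop :=
  ∀ a : Q.A, ∀ x ∈ V (Q.src a), X.map a x ∈ V (Q.tgt a)

/-- Dimension vector (with values in `ℤ`) of a family of subspaces. -/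
noncomputable def dimZ {X : QRep Q} (V : X.SubFam) : Q.V → ℤ :=
  fun i => (Module.finrank ℂ (V i) : ℤ)

/-- Dimension vector (with values in `ℤ`) of a representation. -/
noncomputable def dimVecZ (X : QRep Q) : Q.V → ℤ :=
  fun i => (Module.finrank ℂ (X.carrier i) : ℤ)

/-- The slope of a dimension vector with respect to a stability `θ`. -/
noncomputable def slope (θ : (Q.V → ℤ) →+ ℤ) (d : Q.V → ℤ) : ℚ :=
  (θ d : ℚ) / ((∑ i, d i : ℤ) : ℚ)

/-- A representation is semistable when every nonzero subrepresentation has slope at most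
the slope of the representation. -/
def Semistable (θ : (Q.V → ℤ) →+ ℤ) (X : QRep Q) : Prop :=
  ∀ V : X.SubFam, X.IsSubRep V → V ≠ ⊥ → slope θ (dimZ V) ≤ slope θ X.dimVecZ

/-- Cast along an equality of vertices. -/
def castEquiv (X : QRep Q) {i j : Q.V} (h : i = j) : X.carrier i ≃ₗ[ℂ] X.carrier j := by
  subst h; exact LinearEquiv.refl ℂ _

end QRep

/-- An involution of a quiver. -/
structure QInv (Q : FinQuiver) where
  onV : Q.V → Q.V
  onA : Q.A → Q.A
  invV : ∀ i, onV (onV i) = i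
  invA : ∀ a, onA (onA a) = a
  src_onA : ∀ a, Q.src (onA a) = onV (Q.tgt a)
  tgt_onA : ∀ a, Q.tgt (onA a) = onV (Q.src a)
  fix_onA : ∀ a, Q.tgt a = onV (Q.src a) → onA a = a

/-- A duality structure on a quiver with involution. -/
structure Duality (Q : FinQuiver) (σ : QInv Q) where
  s : Q.V → ℤ
  τ : Q.A → ℤ
  s_pm : ∀ i, s i = 1 ∨ s i = -1
  τ_pm : ∀ a, τ a = 1 ∨ τ a = -1
  s_inv : ∀ i, s (σ.onV i) = s i
  ττ : ∀ a, τ a * τ (σ.onA a) = s (Q.src a) * s (Q.tgt a)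

namespace QRep

variable {Q : FinQuiver}

/-- A stability is σ-compatible if `θ ∘ σ = -θ`. -/
def SigmaCompatible (σ : QInv Q) (θ : (Q.V → ℤ) →+ ℤ) : Prop :=
  ∀ d : Q.V → ℤ, θ (fun i => d (σ.onV i)) = - θ d

/-- The dual representation `S(U)`, with `S(U)_i = (U_{σ(i)})^*` and
`S(u)_α = τ_α ⬝ (u_{σ(α)})^∨`. -/
noncomputable def dualRep (σ : QInv Q) (D : Duality Q σ) (X : QRep Q) : QRep Q where
  carrier := fun i => Module.Dual ℂ (X.carrier (σ.onV i))
  map := fun a => (D.τ a : ℂ) •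
    (((X.castEquiv (σ.src_onA a)).dualMap.symm.toLinearMap).comp
      (((X.map (σ.onA a)).dualMap).comp
        ((X.castEquiv (σ.tgt_onA a)).dualMap.toLinearMap)))

end QRep

namespace QRep

variable {Q : FinQuiver}

/-- Semistability of the subquotient `W/V` of a representation `X` (for `V ≤ W`):
every subrepresentation `Y` with `V ≤ Y ≤ W`, `Y ≠ V`, satisfies
`μ(Y/V) ≤ μ(W/V)`.  (Subrepresentations of `W/V` correspond to such `Y`.) -/
def SubquotSemistable (θ : (Q.V → ℤ) →+ ℤ) (X : QRep Q) (V W : X.SubFam) : Prop :=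
  ∀ Y : X.SubFam, X.IsSubRep Y → V ≤ Y → Y ≤ W → Y ≠ V →
    slope θ (dimZ Y - dimZ V) ≤ slope θ (dimZ W - dimZ V)

/-- The slope of the `k`-th subquotient of a filtration. -/
noncomputable def stepSlope (θ : (Q.V → ℤ) →+ ℤ) {X : QRep Q} (r : ℕ)
    (U : Fin (r+1) → X.SubFam) (k : Fin r) : ℚ :=
  slope θ (dimZ (U k.succ) - dimZ (U k.castSucc))

/-- `F` is the Harder–Narasimhan filtration `0 = X_0 ⊂ X_1 ⊂ ⋯ ⊂ X_r = X`:
a filtration with semistable subquotients of strictly decreasing slopes. -/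
def IsHN (θ : (Q.V → ℤ) →+ ℤ) (X : QRep Q) (r : ℕ) (F : Fin (r+1) → X.SubFam) : Prop :=
  (∀ k, X.IsSubRep (F k)) ∧
  (F 0 = ⊥) ∧
  (F (Fin.last r) = ⊤) ∧
  (∀ k : Fin r, F k.castSucc ≤ F k.succ) ∧
  (∀ k : Fin r, F k.castSucc ≠ F k.succ) ∧
  (∀ k : Fin r, SubquotSemistable θ X (F k.castSucc) (F k.succ)) ∧
  (∀ k l : Fin r, k < l → stepSlope θ r F l < stepSlope θ r F k)

end QRep

/-! Intersecting `U` with the HN filtration gives a filtration `U ⊓ X_j` of `U` whose subquotients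
embed into those of the HN filtration, through `(U ⊓ X_j) ⊔ X_{j-1}`. By semistability the path
`j ↦ (dim (U ⊓ X_j), θ(dim (U ⊓ X_j)))` therefore has steps of slope at most `μ_j`, horizontally no
longer than the corresponding edges of the HN polygon. Because the `μ_j` decrease, such a path
stays below the line of slope `μ_k` through the vertex `(dim X_{k-1}, θ(dim X_{k-1}))`. -/

section Polygon

variable {𝕜 : Type*} [Field 𝕜] [LinearOrder 𝕜] [IsStrictOrderedRing 𝕜]

/- Measure heights relative to the line of slope `μ k` through vertex `k` of the polygon `(B j, A j)`.
Before vertex `k` the path `(b j, a j)` falls relative to the polygon: its steps are no longer than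
the polygon's edges and no steeper, while those edges are at least as steep as the line. After
vertex `k` the path falls relative to the line itself, its steps having slope at most `μ j ≤ μ k`. -/
theorem Fin.le_polygon_of_steps {r : ℕ} (a b A B : Fin (r + 1) → 𝕜) (μ : Fin r → 𝕜)
    (hμ : Antitone μ)
    (ha : ∀ j : Fin r, a j.succ - a j.castSucc ≤ μ j * (b j.succ - b j.castSucc))
    (hb : ∀ j : Fin r, b j.castSucc ≤ b j.succ)
    (hbB : ∀ j : Fin r, b j.succ - b j.castSucc ≤ B j.succ - B j.castSucc)
    (hA : ∀ j : Fin r, A j.succ - A j.castSucc = μ j * (B j.succ - B j.castSucc)) (k : Fin r) :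
    a (Fin.last r) - a 0
      ≤ A k.castSucc - A 0 + μ k * ((b (Fin.last r) - b 0) - (B k.castSucc - B 0)) := by
  let φ : Fin (r + 1) → 𝕜 := fun j =>
    (a j - μ k * b j) - (A (min j k.castSucc) - μ k * B (min j k.castSucc))
  have hφ : Antitone φ := by
    refine Fin.antitone_iff_succ_le.mpr fun j => ?_
    rcases lt_or_ge j k with hjk | hkj
    · have h₁ : min j.succ k.castSucc = j.succ := min_eq_left (Fin.succ_le_castSucc_iff.mpr hjk)
      have h₂ : min j.castSucc k.castSucc = j.castSucc :=
        min_eq_left (Fin.castSucc_le_castSucc_iff.mpr hjk.le)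
      have := mul_le_mul_of_nonneg_left (hbB j) (sub_nonneg.mpr (hμ hjk.le))
      simp only [φ, h₁, h₂]
      linarith [ha j, hA j]
    · have h₁ : min j.succ k.castSucc = k.castSucc :=
        min_eq_right ((Fin.castSucc_le_castSucc_iff.mpr hkj).trans (Fin.castSucc_le_succ j))
      have h₂ : min j.castSucc k.castSucc = k.castSucc :=
        min_eq_right (Fin.castSucc_le_castSucc_iff.mpr hkj)
      have := mul_le_mul_of_nonneg_right (hμ hkj) (sub_nonneg.mpr (hb j))
      simp only [φ, h₁, h₂]
      linarith [ha j]
  have h := hφ (Fin.zero_le (Fin.last r))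
  simp only [φ, min_eq_right (Fin.le_last _), min_eq_left (Fin.zero_le _)] at h
  linarith

end Polygon

namespace QRep

variable {Q : FinQuiver} {X : QRep Q} {U V W : X.SubFam}

theorem IsSubRep.inf (hV : X.IsSubRep V) (hW : X.IsSubRep W) : X.IsSubRep (V ⊓ W) :=
  fun a x hx => ⟨hV a x hx.1, hW a x hx.2⟩

theorem IsSubRep.sup (hV : X.IsSubRep V) (hW : X.IsSubRep W) : X.IsSubRep (V ⊔ W) := by
  intro a x hx
  obtain ⟨v, hv, w, hw, rfl⟩ := Submodule.mem_sup.mp hx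
  rw [map_add]
  exact Submodule.add_mem_sup (hV a v hv) (hW a w hw)

@[simp]
theorem dimZ_bot : dimZ (⊥ : X.SubFam) = 0 := by
  ext i
  simp [dimZ]

theorem dimZ_mono (h : V ≤ W) : dimZ V ≤ dimZ W :=
  fun i => Nat.cast_le.mpr (Submodule.finrank_mono (h i))

theorem dimZ_sup_add_dimZ_inf (V W : X.SubFam) :
    dimZ (V ⊔ W) + dimZ (V ⊓ W) = dimZ V + dimZ W := by
  ext i
  exact congrArg Nat.cast (Submodule.finrank_sup_add_finrank_inf_eq (V i) (W i))

-- the second isomorphism theorem `(U ⊓ W ⊔ V) / V ≅ (U ⊓ W) / (U ⊓ V)`, on dimension vectors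
theorem dimZ_inf_sup_sub (U : X.SubFam) (hVW : V ≤ W) :
    dimZ (U ⊓ W ⊔ V) - dimZ V = dimZ (U ⊓ W) - dimZ (U ⊓ V) := by
  have h := dimZ_sup_add_dimZ_inf (U ⊓ W) V
  rw [inf_assoc, inf_eq_right.mpr hVW] at h
  rw [sub_eq_sub_iff_add_eq_add, h]

theorem dimZ_inf_sub_le (U : X.SubFam) (hVW : V ≤ W) :
    dimZ (U ⊓ W) - dimZ (U ⊓ V) ≤ dimZ W - dimZ V := by
  rw [← dimZ_inf_sup_sub U hVW]
  exact sub_le_sub_right (dimZ_mono (sup_le inf_le_right hVW)) _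

theorem sum_dimZ_sub_pos (hVW : V ≤ W) (hne : V ≠ W) : 0 < ∑ i, (dimZ W - dimZ V) i := by
  obtain ⟨i, hi⟩ := Function.ne_iff.mp hne
  refine Finset.sum_pos' (fun j _ => sub_nonneg.mpr (dimZ_mono hVW j)) ⟨i, Finset.mem_univ i, ?_⟩
  exact sub_pos.mpr (Nat.cast_lt.mpr
    (Submodule.finrank_lt_finrank_of_lt (lt_of_le_of_ne (hVW i) hi)))

theorem slope_mul_sum (θ : (Q.V → ℤ) →+ ℤ) {d : Q.V → ℤ} (hd : ∑ i, d i ≠ 0) :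
    slope θ d * ((∑ i, d i : ℤ) : ℚ) = θ d :=
  div_mul_cancel₀ _ (by exact_mod_cast hd)

theorem le_mul_sum_of_slope_le (θ : (Q.V → ℤ) →+ ℤ) {d : Q.V → ℤ} {s : ℚ} (hd : 0 < ∑ i, d i)
    (h : slope θ d ≤ s) : (θ d : ℚ) ≤ s * ((∑ i, d i : ℤ) : ℚ) :=
  (div_le_iff₀ (by exact_mod_cast hd)).mp h

theorem SubquotSemistable.theta_inf_sub_le {θ : (Q.V → ℤ) →+ ℤ}
    (hss : SubquotSemistable θ X V W) (hU : X.IsSubRep U) (hV : X.IsSubRep V)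
    (hW : X.IsSubRep W) (hVW : V ≤ W) :
    (θ (dimZ (U ⊓ W) - dimZ (U ⊓ V)) : ℚ)
      ≤ slope θ (dimZ W - dimZ V) * ((∑ i, (dimZ (U ⊓ W) - dimZ (U ⊓ V)) i : ℤ) : ℚ) := by
  rw [← dimZ_inf_sup_sub U hVW]
  by_cases hY : U ⊓ W ⊔ V = V
  · simp [hY]
  exact le_mul_sum_of_slope_le θ (sum_dimZ_sub_pos le_sup_right (Ne.symm hY))
    (hss _ ((hU.inf hW).sup hV) le_sup_right (sup_le inf_le_right hVW) hY)

end QRep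

theorem point_below_HN_polygon_general (Q : FinQuiver) (θ : (Q.V → ℤ) →+ ℤ)
    (X : QRep Q)
    (r : ℕ) (F : Fin (r+1) → X.SubFam) (hHN : QRep.IsHN θ X r F)
    (U : X.SubFam) (hU : X.IsSubRep U) (k : Fin r) :
    (θ (QRep.dimZ U) : ℚ) ≤ (θ (QRep.dimZ (F k.castSucc)) : ℚ)
      + QRep.stepSlope θ r F k *
        ((∑ i, (QRep.dimZ U i : ℚ)) - ∑ i, (QRep.dimZ (F k.castSucc) i : ℚ)) := by
  obtain ⟨hsub, hF0, hFlast, hmono, hne, hss, hdec⟩ := hHN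
  have key := Fin.le_polygon_of_steps
    (fun j => (θ (QRep.dimZ (U ⊓ F j)) : ℚ)) (fun j => ∑ i, (QRep.dimZ (U ⊓ F j) i : ℚ))
    (fun j => (θ (QRep.dimZ (F j)) : ℚ)) (fun j => ∑ i, (QRep.dimZ (F j) i : ℚ))
    (QRep.stepSlope θ r F) (StrictAnti.antitone hdec) ?_ ?_ ?_ ?_ k
  · simpa [hF0, hFlast] using key
  · intro j
    have := (hss j).theta_inf_sub_le hU (hsub _) (hsub _) (hmono j)
    push_cast [map_sub, Pi.sub_apply, Finset.sum_sub_distrib] at this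
    exact this
  · exact fun j => Finset.sum_le_sum fun i _ =>
      Int.cast_le.mpr (QRep.dimZ_mono (inf_le_inf_left U (hmono j)) i)
  · intro j
    simp only [← Finset.sum_sub_distrib, ← Int.cast_sub]
    exact Finset.sum_le_sum fun i _ => Int.cast_le.mpr (QRep.dimZ_inf_sub_le U (hmono j) i)
  · intro j
    have := QRep.slope_mul_sum θ (QRep.sum_dimZ_sub_pos (hmono j) (hne j)).ne'
    push_cast [map_sub, Pi.sub_apply, Finset.sum_sub_distrib] at this
    exact this.symm

/-- Let `X` be a nonzero representation of a finite quiver `Q` with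
Harder–Narasimhan filtration `0 = X_0 ⊂ X_1 ⊂ ⋯ ⊂ X_r = X` and `μ_k = μ(X_k/X_{k-1})`.
Then for every subrepresentation `U ⊆ X` and every `k ∈ {1, …, r}` one has
`θ(dim U) ≤ θ(dim X_{k-1}) + μ_k (dim U - dim X_{k-1})` in `ℚ`, i.e. the point
`(dim U, θ(dim U))` lies on or below the polygon of the HN filtration. -/
theorem point_below_HN_polygon (Q : FinQuiver) (θ : (Q.V → ℤ) →+ ℤ)
    (X : QRep Q) (hX : X.dimVecZ ≠ 0)
    (r : ℕ) (F : Fin (r+1) → X.SubFam) (hHN : QRep.IsHN θ X r F)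
    (U : X.SubFam) (hU : X.IsSubRep U) (k : Fin r) :
    (θ (QRep.dimZ U) : ℚ) ≤ (θ (QRep.dimZ (F k.castSucc)) : ℚ)
      + QRep.stepSlope θ r F k *
        ((∑ i, (QRep.dimZ U i : ℚ)) - ∑ i, (QRep.dimZ (F k.castSucc) i : ℚ)) :=
  point_below_HN_polygon_general Q θ X r F hHN U hU k
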